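/- arXiv:2311.11723 — 3 statements merged into one kernel-verified Lean document; each statement's English description precedes it below -/
import Mathlib

section
/- Let (Ω, F, μ) be a standard Borel probability space, let R : Ω → ℝ and T : Ω → ℝ be measurable random variables, and let Y : Ω → ℝ be integrable. Assume that Y and T are conditionally independent given the σ-algebra σ(R) generated by R, and that the conditional expectation of Y given σ(R) equals R μ-almost surely. Then the conditional expectation of Y given σ(T) equals the conditional expectation of R given σ(T) μ-almost surely. -/
open MeasureTheory ProbabilityTheory

section Aux

variable {Ω : Type*} [mΩ : MeasurableSpace Ω]

/-- Integration against a fixed a.e.-bounded function is continuous on `L¹`. -/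
lemma continuous_integral_mul_bdd (μ : Measure Ω) {g : Ω → ℝ}
    (hgm : AEStronglyMeasurable g μ) (hbdd : ∀ᵐ x ∂μ, ‖g x‖ ≤ 1) :
    Continuous fun f : Lp ℝ 1 μ => ∫ x, (f : Ω → ℝ) x * g x ∂μ := by
  refine (LipschitzWith.of_dist_le_mul fun f f' => ?_).continuous (K := 1)
  have hf : Integrable (f : Ω → ℝ) μ := L1.integrable_coeFn f
  have hf' : Integrable (f' : Ω → ℝ) μ := L1.integrable_coeFn f'
  have hmul : ∀ (u : Ω → ℝ), Integrable u μ → Integrable (fun x => u x * g x) μ := by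
    intro u hu
    have := Integrable.bdd_mul (f := g) (g := u) hu hgm hbdd
    exact this.congr (Filter.Eventually.of_forall fun x => mul_comm _ _)
  have h1 : dist (∫ x, (f : Ω → ℝ) x * g x ∂μ) (∫ x, (f' : Ω → ℝ) x * g x ∂μ)
      = |∫ x, ((f : Ω → ℝ) x - (f' : Ω → ℝ) x) * g x ∂μ| := by
    rw [Real.dist_eq, ← integral_sub (hmul _ hf) (hmul _ hf')]
    congr 1
    refine integral_congr_ae (Filter.Eventually.of_forall fun x => ?_)
    ring
  rw [h1, NNReal.coe_one, one_mul, L1.dist_eq_integral_dist, ← Real.norm_eq_abs]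
  refine le_trans (norm_integral_le_integral_norm _) ?_
  have hint1 : Integrable (fun a => ‖((f : Ω → ℝ) a - (f' : Ω → ℝ) a) * g a‖) μ := by
    refine Integrable.norm ((hmul _ (hf.sub hf')).congr ?_)
    exact Filter.Eventually.of_forall fun x => by simp [sub_mul]
  have hint2 : Integrable (fun a => dist ((f : Ω → ℝ) a) ((f' : Ω → ℝ) a)) μ := by
    refine ((hf.sub hf').norm).congr ?_
    exact Filter.Eventually.of_forall fun x => by simp [dist_eq_norm]
  refine integral_mono_ae hint1 hint2 ?_
  filter_upwards [hbdd] with x hx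
  calc ‖((f : Ω → ℝ) x - (f' : Ω → ℝ) x) * g x‖
      = ‖(f : Ω → ℝ) x - (f' : Ω → ℝ) x‖ * ‖g x‖ := norm_mul _ _
    _ ≤ ‖(f : Ω → ℝ) x - (f' : Ω → ℝ) x‖ * 1 :=
        mul_le_mul_of_nonneg_left hx (norm_nonneg _)
    _ = dist ((f : Ω → ℝ) x) ((f' : Ω → ℝ) x) := by rw [mul_one, Real.dist_eq, Real.norm_eq_abs]

variable [StandardBorelSpace Ω] [Nonempty Ω]

/-- Key step: under conditional independence of `Y` and `T` given `σ(R)` and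
`E[Y | σ(R)] = R` a.e., the integrals of `Y` and of `R` agree on every `σ(T)`-set.
Here `Y` is assumed (globally) measurable. -/
lemma setIntegral_eq_of_condIndep (μ : Measure Ω) [IsProbabilityMeasure μ]
    (R T Y : Ω → ℝ) (hR : Measurable R) (hT : Measurable T)
    (hYm : Measurable Y) (hY : Integrable Y μ)
    (hindep : CondIndepFun (MeasurableSpace.comap R inferInstance) hR.comap_le Y T μ)
    (hcond : μ[Y | MeasurableSpace.comap R inferInstance] =ᵐ[μ] R)
    {B : Set Ω} (hB : MeasurableSet[MeasurableSpace.comap T inferInstance] B) :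
    ∫ x in B, Y x ∂μ = ∫ x in B, R x ∂μ := by
  have hmR : MeasurableSpace.comap R inferInstance ≤ mΩ := hR.comap_le
  have hBm : MeasurableSet B := hT.comap_le _ hB
  set gB := μ[B.indicator (fun _ => (1:ℝ)) | MeasurableSpace.comap R inferInstance] with hgB_def
  have hg_sm : StronglyMeasurable[MeasurableSpace.comap R inferInstance] gB := stronglyMeasurable_condExp
  have hg_meas0 : AEStronglyMeasurable gB μ := (hg_sm.mono hmR).aestronglyMeasurable
  have h1B_int : Integrable (B.indicator fun _ => (1:ℝ)) μ :=
    (integrable_const (1:ℝ)).indicator hBm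
  have hg_bdd : ∀ᵐ x ∂μ, ‖gB x‖ ≤ 1 := by
    have h0 : 0 ≤ᵐ[μ] gB :=
      condExp_nonneg (Filter.Eventually.of_forall fun x => Set.indicator_nonneg
        (fun _ _ => zero_le_one) x)
    have h1 : gB ≤ᵐ[μ] μ[(fun _ => (1:ℝ)) | MeasurableSpace.comap R inferInstance] :=
      condExp_mono h1B_int (integrable_const _)
        (Filter.Eventually.of_forall fun x => Set.indicator_le_self' (fun _ _ => zero_le_one) x)
    have h2 : μ[(fun _ => (1:ℝ)) | MeasurableSpace.comap R inferInstance] = fun _ => (1:ℝ) := condExp_const hmR 1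
    filter_upwards [h0, h1] with x hx0 hx1
    rw [Real.norm_eq_abs, abs_le]
    constructor
    · simp only [Pi.zero_apply] at hx0
      linarith
    · calc gB x ≤ (μ[(fun _ => (1:ℝ)) | MeasurableSpace.comap R inferInstance]) x := hx1
        _ = 1 := by rw [h2]
  -- integrability of bounded multiples of gB
  have hmulg : ∀ (u : Ω → ℝ), Integrable u μ → Integrable (fun x => gB x * u x) μ := by
    intro u hu
    exact Integrable.bdd_mul (f := gB) (g := u) hu hg_meas0 hg_bdd
  -- the inductive claim
  have hP : ∀ ⦃f : Ω → ℝ⦄, MemLp f 1 μ →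
      AEStronglyMeasurable[MeasurableSpace.comap Y inferInstance] f μ →
      ∫ x in B, f x ∂μ = ∫ x, f x * gB x ∂μ := by
    have hmY : MeasurableSpace.comap Y inferInstance ≤ mΩ := hYm.comap_le
    refine MemLp.induction_stronglyMeasurable hmY ENNReal.one_ne_top
      (fun f => ∫ x in B, f x ∂μ = ∫ x, f x * gB x ∂μ) ?_ ?_ ?_ ?_
    · -- indicators
      intro c s hs _
      have hsΩ : MeasurableSet s := hmY _ hs
      have hIs_int : Integrable (s.indicator fun _ => (1:ℝ)) μ :=
        (integrable_const (1:ℝ)).indicator hsΩ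
      have hfact : ∀ x, s.indicator (fun _ => c) x * gB x
          = c * (s.indicator (fun _ => (1:ℝ)) x * gB x) := by
        intro x
        by_cases hx : x ∈ s <;>
          simp [Set.indicator_of_mem, Set.indicator_of_notMem, hx, mul_comm, mul_assoc]
      have hcind : (μ⟦s ∩ B | MeasurableSpace.comap R inferInstance⟧) =ᵐ[μ] (μ⟦s | MeasurableSpace.comap R inferInstance⟧) * (μ⟦B | MeasurableSpace.comap R inferInstance⟧) :=
        ((condIndepFun_iff _ hR.comap_le Y T hYm hT μ).mp hindep) s B hs hB
      have hsB : ∫ x, s.indicator (fun _ => (1:ℝ)) x * gB x ∂μ = (μ (s ∩ B)).toReal := by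
        have e1 : ∫ x, s.indicator (fun _ => (1:ℝ)) x * gB x ∂μ
            = ∫ x, gB x * s.indicator (fun _ => (1:ℝ)) x ∂μ :=
          integral_congr_ae (Filter.Eventually.of_forall fun x => mul_comm _ _)
        have e2 : ∫ x, gB x * s.indicator (fun _ => (1:ℝ)) x ∂μ
            = ∫ x, (μ[(fun x => gB x * s.indicator (fun _ => (1:ℝ)) x) | MeasurableSpace.comap R inferInstance]) x ∂μ :=
          (integral_condExp hmR).symm
        have e3 : (μ[(fun x => gB x * s.indicator (fun _ => (1:ℝ)) x) | MeasurableSpace.comap R inferInstance]) =ᵐ[μ]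
            fun x => gB x * (μ⟦s | MeasurableSpace.comap R inferInstance⟧) x := by
          have := condExp_stronglyMeasurable_mul_of_bound hmR hg_sm hIs_int 1 hg_bdd
          exact this
        have e4 : ∫ x, gB x * (μ⟦s | MeasurableSpace.comap R inferInstance⟧) x ∂μ = ∫ x, (μ⟦s ∩ B | MeasurableSpace.comap R inferInstance⟧) x ∂μ := by
          refine integral_congr_ae ?_
          filter_upwards [hcind] with x hx
          rw [hx]
          simp only [Pi.mul_apply, hgB_def]
          ring
        have e5 : ∫ x, (μ⟦s ∩ B | MeasurableSpace.comap R inferInstance⟧) x ∂μ = (μ (s ∩ B)).toReal := by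
          rw [integral_condExp hmR, integral_indicator (hsΩ.inter hBm),
            setIntegral_const, smul_eq_mul, mul_one, measureReal_def]
        rw [e1, e2, integral_congr_ae e3, e4, e5]
      calc ∫ x in B, s.indicator (fun _ => c) x ∂μ
          = ∫ _x in B ∩ s, c ∂μ := setIntegral_indicator hsΩ
        _ = (μ (s ∩ B)).toReal • c := by rw [setIntegral_const, Set.inter_comm, measureReal_def]
        _ = c * (μ (s ∩ B)).toReal := by rw [smul_eq_mul, mul_comm]
        _ = c * ∫ x, s.indicator (fun _ => (1:ℝ)) x * gB x ∂μ := by rw [hsB]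
        _ = ∫ x, c * (s.indicator (fun _ => (1:ℝ)) x * gB x) ∂μ := (integral_const_mul _ _).symm
        _ = ∫ x, s.indicator (fun _ => c) x * gB x ∂μ := by
            refine integral_congr_ae (Filter.Eventually.of_forall fun x => ?_)
            exact (hfact x).symm
    · -- additivity
      intro f g _ hfi hgi _ _ hPf hPg
      have hf1 : Integrable f μ := memLp_one_iff_integrable.mp hfi
      have hg1 : Integrable g μ := memLp_one_iff_integrable.mp hgi
      have hfg : ∀ x, (f + g) x * gB x = f x * gB x + g x * gB x := fun x => by
        simp [add_mul]
      have hfgB : Integrable (fun x => f x * gB x) μ :=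
        (hmulg f hf1).congr (Filter.Eventually.of_forall fun x => mul_comm _ _)
      have hggB : Integrable (fun x => g x * gB x) μ :=
        (hmulg g hg1).congr (Filter.Eventually.of_forall fun x => mul_comm _ _)
      calc ∫ x in B, (f + g) x ∂μ
          = ∫ x in B, f x ∂μ + ∫ x in B, g x ∂μ :=
            integral_add hf1.integrableOn hg1.integrableOn
        _ = (∫ x, f x * gB x ∂μ) + ∫ x, g x * gB x ∂μ := by rw [hPf, hPg]
        _ = ∫ x, (f + g) x * gB x ∂μ := by
            rw [← integral_add hfgB hggB]
            exact integral_congr_ae (Filter.Eventually.of_forall fun x => (hfg x).symm)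
    · -- closedness
      have heq₁ : (fun f : lpMeas ℝ ℝ (MeasurableSpace.comap Y inferInstance) 1 μ =>
            ∫ x in B, (f : Ω → ℝ) x ∂μ) =
          (fun f : Lp ℝ 1 μ => ∫ x in B, f x ∂μ) ∘ Submodule.subtypeL _ := by
        refine funext fun f => integral_congr_ae (ae_restrict_of_ae ?_)
        simp_rw [Submodule.coe_subtypeL', Submodule.coe_subtype]
        exact Filter.Eventually.of_forall fun _ => by trivial
      have heq₂ : (fun f : lpMeas ℝ ℝ (MeasurableSpace.comap Y inferInstance) 1 μ =>
            ∫ x, (f : Ω → ℝ) x * gB x ∂μ) =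
          (fun f : Lp ℝ 1 μ => ∫ x, (f : Ω → ℝ) x * gB x ∂μ) ∘ Submodule.subtypeL _ := by
        refine funext fun f => integral_congr_ae ?_
        simp_rw [Submodule.coe_subtypeL', Submodule.coe_subtype]
        exact Filter.Eventually.of_forall fun _ => by trivial
      refine isClosed_eq ?_ ?_
      · rw [heq₁]
        exact (continuous_setIntegral _).comp (ContinuousLinearMap.continuous _)
      · rw [heq₂]
        exact (continuous_integral_mul_bdd μ hg_meas0 hg_bdd).comp
          (ContinuousLinearMap.continuous _)
    · -- stability under a.e. equality
      intro f g hfg _ hPf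
      have h1 : ∫ x in B, g x ∂μ = ∫ x in B, f x ∂μ :=
        integral_congr_ae (ae_restrict_of_ae hfg.symm)
      have h2 : ∫ x, g x * gB x ∂μ = ∫ x, f x * gB x ∂μ :=
        integral_congr_ae ((hfg.symm).mul Filter.EventuallyEq.rfl)
      rw [h1, h2, hPf]
  -- apply the claim to Y
  have hYsm : StronglyMeasurable[MeasurableSpace.comap Y inferInstance] Y :=
    (measurable_iff_comap_le.mpr le_rfl).stronglyMeasurable
  have hYB : ∫ x in B, Y x ∂μ = ∫ x, Y x * gB x ∂μ :=
    hP (memLp_one_iff_integrable.mpr hY) hYsm.aestronglyMeasurable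
  -- ∫ Y·gB = ∫ R·gB
  have hRint : Integrable R μ := integrable_condExp.congr hcond
  have hYg : ∫ x, Y x * gB x ∂μ = ∫ x, R x * gB x ∂μ := by
    have e1 : ∫ x, Y x * gB x ∂μ = ∫ x, gB x * Y x ∂μ :=
      integral_congr_ae (Filter.Eventually.of_forall fun x => mul_comm _ _)
    have e2 : ∫ x, gB x * Y x ∂μ = ∫ x, (μ[(fun x => gB x * Y x) | MeasurableSpace.comap R inferInstance]) x ∂μ :=
      (integral_condExp hmR).symm
    have e3 : (μ[(fun x => gB x * Y x) | MeasurableSpace.comap R inferInstance]) =ᵐ[μ] fun x => gB x * (μ[Y | MeasurableSpace.comap R inferInstance]) x :=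
      condExp_stronglyMeasurable_mul_of_bound hmR hg_sm hY 1 hg_bdd
    have e4 : (fun x => gB x * (μ[Y | MeasurableSpace.comap R inferInstance]) x) =ᵐ[μ] fun x => R x * gB x := by
      filter_upwards [hcond] with x hx
      rw [hx, mul_comm]
    rw [e1, e2, integral_congr_ae e3, integral_congr_ae e4]
  -- ∫ R·gB = ∫_B R
  have hRg : ∫ x, R x * gB x ∂μ = ∫ x in B, R x ∂μ := by
    have hRsm : StronglyMeasurable[MeasurableSpace.comap R inferInstance] R :=
      (measurable_iff_comap_le.mpr le_rfl).stronglyMeasurable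
    have hRI_int : Integrable (R * B.indicator (fun _ => (1:ℝ))) μ := by
      have : Integrable (fun x => B.indicator (fun _ => (1:ℝ)) x * R x) μ :=
        Integrable.bdd_mul (c := 1) hRint
          ((stronglyMeasurable_const.indicator hBm).aestronglyMeasurable)
          (Filter.Eventually.of_forall fun x => by
            by_cases hx : x ∈ B <;>
              simp [Set.indicator_of_mem, Set.indicator_of_notMem, hx])
      exact this.congr (Filter.Eventually.of_forall fun x => mul_comm _ _)
    have e1 : ∫ x in B, R x ∂μ = ∫ x, (R * B.indicator (fun _ => (1:ℝ))) x ∂μ := by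
      rw [← integral_indicator hBm]
      refine integral_congr_ae (Filter.Eventually.of_forall fun x => ?_)
      by_cases hx : x ∈ B <;>
        simp [Set.indicator_of_mem, Set.indicator_of_notMem, hx]
    have e2 : ∫ x, (R * B.indicator (fun _ => (1:ℝ))) x ∂μ
        = ∫ x, (μ[R * B.indicator (fun _ => (1:ℝ)) | MeasurableSpace.comap R inferInstance]) x ∂μ :=
      (integral_condExp hmR).symm
    have e3 : (μ[R * B.indicator (fun _ => (1:ℝ)) | MeasurableSpace.comap R inferInstance]) =ᵐ[μ]
        R * μ[B.indicator (fun _ => (1:ℝ)) | MeasurableSpace.comap R inferInstance] :=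
      condExp_mul_of_stronglyMeasurable_left hRsm hRI_int h1B_int
    rw [e1, e2, integral_congr_ae e3]
    rfl
  rw [hYB, hYg, hRg]

end Aux

/-- If `Y` and `T` are conditionally independent given `σ(R)` and `E[Y | σ(R)] = R`
a.e., then `E[Y | σ(T)] = E[R | σ(T)]` a.e. (the expected test positivity conditioned
on train positivity / model score equals the expected true positivity so conditioned). -/
theorem condexp_eq_of_condIndep_of_condexp_eq
    {Ω : Type*} [MeasurableSpace Ω] [StandardBorelSpace Ω] [Nonempty Ω]
    (μ : Measure Ω) [IsProbabilityMeasure μ]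
    (R T Y : Ω → ℝ) (hR : Measurable R) (hT : Measurable T)
    (hY : Integrable Y μ)
    (hindep : CondIndepFun (MeasurableSpace.comap R inferInstance) hR.comap_le Y T μ)
    (hcond : μ[Y | MeasurableSpace.comap R inferInstance] =ᵐ[μ] R) :
    μ[Y | MeasurableSpace.comap T inferInstance] =ᵐ[μ]
      μ[R | MeasurableSpace.comap T inferInstance] := by
  have hmR : MeasurableSpace.comap R inferInstance ≤ ‹MeasurableSpace Ω› := hR.comap_le
  have hmT : MeasurableSpace.comap T inferInstance ≤ ‹MeasurableSpace Ω› := hT.comap_le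
  -- a measurable modification of Y
  set Y' := hY.1.mk Y with hY'_def
  have hY'sm : StronglyMeasurable Y' := hY.1.stronglyMeasurable_mk
  have hY'm : Measurable Y' := hY'sm.measurable
  have haeYY' : Y =ᵐ[μ] Y' := hY.1.ae_eq_mk
  have hY' : Integrable Y' μ := hY.congr haeYY'
  -- conditional independence transfers to the modification
  have hindep' : CondIndepFun (MeasurableSpace.comap R inferInstance) hR.comap_le Y' T μ := by
    have hnull : μ {a | ¬ Y a = Y' a} = 0 := ae_iff.mp haeYY'
    obtain ⟨N, hNsub, hNm, hNμ⟩ := exists_measurable_superset_of_null hnull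
    have hind0 : (fun ω => (condExpKernel μ (MeasurableSpace.comap R inferInstance) ω N).toReal) =ᵐ[μ] 0 := by
      have h1 : (fun ω => (condExpKernel μ (MeasurableSpace.comap R inferInstance) ω N).toReal) =ᵐ[μ] μ⟦N | MeasurableSpace.comap R inferInstance⟧ :=
        condExpKernel_ae_eq_condExp hmR hNm
      have h2 : (μ⟦N | MeasurableSpace.comap R inferInstance⟧) =ᵐ[μ] 0 := by
        have hind : N.indicator (fun _ => (1:ℝ)) =ᵐ[μ] 0 := by
          have : ∀ᵐ x ∂μ, x ∉ N := by
            rw [ae_iff]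
            simpa using hNμ
          filter_upwards [this] with x hx
          simp [Set.indicator_of_notMem hx]
        calc (μ⟦N | MeasurableSpace.comap R inferInstance⟧) =ᵐ[μ] μ[(0 : Ω → ℝ) | MeasurableSpace.comap R inferInstance] := condExp_congr_ae hind
          _ = 0 := condExp_zero
      exact h1.trans h2
    have hind0' : (fun ω => (condExpKernel μ (MeasurableSpace.comap R inferInstance) ω N).toReal) =ᵐ[μ.trim hmR] 0 := by
      rw [StronglyMeasurable.ae_eq_trim_iff hmR
        ((measurable_condExpKernel hNm).ennreal_toReal).stronglyMeasurable
        stronglyMeasurable_zero]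
      exact hind0
    have hae : ∀ᵐ ω ∂(μ.trim hmR), Y =ᵐ[condExpKernel μ (MeasurableSpace.comap R inferInstance) ω] Y' := by
      filter_upwards [hind0'] with ω hω
      have hfin : condExpKernel μ (MeasurableSpace.comap R inferInstance) ω N ≠ ⊤ := measure_ne_top _ _
      have h0 : condExpKernel μ (MeasurableSpace.comap R inferInstance) ω N = 0 := by
        simpa [ENNReal.toReal_eq_zero_iff, hfin] using hω
      rw [Filter.EventuallyEq, ae_iff]
      exact measure_mono_null (fun x hx => hNsub hx) h0
    exact Kernel.IndepFun.congr' hindep hae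
      (Filter.Eventually.of_forall fun ω => Filter.EventuallyEq.rfl)
  have hcond' : μ[Y' | MeasurableSpace.comap R inferInstance] =ᵐ[μ] R :=
    (condExp_congr_ae haeYY'.symm).trans hcond
  have hset : ∀ s : Set Ω, MeasurableSet[MeasurableSpace.comap T inferInstance] s →
      ∫ x in s, Y x ∂μ = ∫ x in s, R x ∂μ := by
    intro s hs
    have h1 : ∫ x in s, Y x ∂μ = ∫ x in s, Y' x ∂μ :=
      integral_congr_ae (ae_restrict_of_ae haeYY')
    rw [h1]
    exact setIntegral_eq_of_condIndep μ R T Y' hR hT hY'm hY' hindep' hcond' hs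
  have hRint : Integrable R μ := integrable_condExp.congr hcond
  refine (ae_eq_condExp_of_forall_setIntegral_eq hmT hY
    (fun s _ _ => integrable_condExp.integrableOn) (fun s hs hμs => ?_)
    stronglyMeasurable_condExp.aestronglyMeasurable).symm
  rw [setIntegral_condExp hmT hRint hs]
  exact (hset s hs).symm
end

section
/- Let K, L be positive natural numbers, and let p, n : Fin K × Fin L → ℝ assign to each bin nonnegative counts with p(i,j) ≤ n(i,j). Let σ > 0, η ≥ 0, and P₀ > 0 be reals. For a boundary b : Fin K → ℕ with b(i) ≤ L for all i, let B⁺(b) = {(i,j) : j > b(i)} be its positive region, where score bins in level i are indexed j ∈ {1,…,L}. For each i, let b_chp(i) be the least threshold j ∈ {0,…,L} such that p(i,j') ≥ σ·n(i,j') for every j' with j < j' ≤ L. If b satisfies ∑_{(i,j)∈B⁺(b)} p(i,j) ≥ σ·∑_{(i,j)∈B⁺(b)} n(i,j) and ∑_{(i,j)∈B⁺(b)} p(i,j) ≥ η·P₀, then the boundary b' defined by b'(i) = min(b(i), b_chp(i)) also satisfies ∑_{(i,j)∈B⁺(b')} p(i,j) ≥ σ·∑_{(i,j)∈B⁺(b')}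 n(i,j) and ∑_{(i,j)∈B⁺(b')} p(i,j) ≥ η·P₀. -/
/-- Lemma (pos_bins): adding the contiguous high-precision tail of each uncertainty
level to the positive region of a boundary preserves both the precision bound and
the recall bound. Bins are indexed by uncertainty level `i : Fin K` and score level
`j ∈ {1,…,L}`; the positive region of a boundary `b` at level `i` consists of the
score bins `j` with `b i < j ≤ L`. -/
theorem chp_tail_preserves_precision_recall
    (K L : ℕ) (hK : 0 < K) (hL : 0 < L)
    (p n : Fin K → ℕ → ℝ) (σ η P₀ : ℝ) (hσ : 0 < σ) (hη : 0 ≤ η) (hP₀ : 0 < P₀)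
    (hpn : ∀ i : Fin K, ∀ j ∈ Finset.Icc 1 L, 0 ≤ p i j ∧ p i j ≤ n i j)
    (b : Fin K → ℕ) (hb : ∀ i, b i ≤ L)
    (bchp : Fin K → ℕ)
    (hchp : ∀ i : Fin K,
      IsLeast {j : ℕ | j ≤ L ∧ ∀ j' ∈ Finset.Ioc j L, σ * n i j' ≤ p i j'} (bchp i))
    (hprec : σ * ∑ i : Fin K, ∑ j ∈ Finset.Ioc (b i) L, n i j ≤
      ∑ i : Fin K, ∑ j ∈ Finset.Ioc (b i) L, p i j)
    (hrec : η * P₀ ≤ ∑ i : Fin K, ∑ j ∈ Finset.Ioc (b i) L, p i j) :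
    σ * ∑ i : Fin K, ∑ j ∈ Finset.Ioc (min (b i) (bchp i)) L, n i j ≤
        ∑ i : Fin K, ∑ j ∈ Finset.Ioc (min (b i) (bchp i)) L, p i j ∧
      η * P₀ ≤ ∑ i : Fin K, ∑ j ∈ Finset.Ioc (min (b i) (bchp i)) L, p i j := by
  have key : ∀ i : Fin K, ∀ j ∈ Finset.Ioc (min (b i) (bchp i)) (b i),
      σ * n i j ≤ p i j ∧ 0 ≤ p i j := by
    intro i j hj
    simp only [Finset.mem_Ioc] at hj
    have hjchp : bchp i < j := by omega
    have hjL : j ≤ L := le_trans hj.2 (hb i)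
    have h1j : 1 ≤ j := by omega
    have hp := hpn i j (Finset.mem_Icc.mpr ⟨h1j, hjL⟩)
    exact ⟨(hchp i).1.2 j (Finset.mem_Ioc.mpr ⟨hjchp, hjL⟩), hp.1⟩
  have hsplit_p : ∀ i : Fin K, ∑ j ∈ Finset.Ioc (min (b i) (bchp i)) L, p i j
      = (∑ j ∈ Finset.Ioc (min (b i) (bchp i)) (b i), p i j)
        + ∑ j ∈ Finset.Ioc (b i) L, p i j :=
    fun i => (Finset.sum_Ioc_consecutive _ (min_le_left _ _) (hb i)).symm
  have hsplit_n : ∀ i : Fin K, ∑ j ∈ Finset.Ioc (min (b i) (bchp i)) L, n i j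
      = (∑ j ∈ Finset.Ioc (min (b i) (bchp i)) (b i), n i j)
        + ∑ j ∈ Finset.Ioc (b i) L, n i j :=
    fun i => (Finset.sum_Ioc_consecutive _ (min_le_left _ _) (hb i)).symm
  have hEp : 0 ≤ ∑ i : Fin K, ∑ j ∈ Finset.Ioc (min (b i) (bchp i)) (b i), p i j :=
    Finset.sum_nonneg fun i _ => Finset.sum_nonneg fun j hj => (key i j hj).2
  have hEn : σ * (∑ i : Fin K, ∑ j ∈ Finset.Ioc (min (b i) (bchp i)) (b i), n i j)
      ≤ ∑ i : Fin K, ∑ j ∈ Finset.Ioc (min (b i) (bchp i)) (b i), p i j := by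
    rw [Finset.mul_sum]
    refine Finset.sum_le_sum fun i _ => ?_
    rw [Finset.mul_sum]
    exact Finset.sum_le_sum fun j hj => (key i j hj).1
  simp only [hsplit_p, hsplit_n, Finset.sum_add_distrib]
  refine ⟨?_, by linarith⟩
  rw [mul_add]
  exact add_le_add hEn hprec
end

section
/- Let t be a natural number, a : Fin t → ℕ, T ≥ 1 a natural number, σ a real with 0 < σ ≤ 1/2, and ε a real with 0 < ε < σ/(2(T+1)). For c ∈ {0,1} and a finite subset S ⊆ Fin t, define TP(c,S) = c·2σT + 2ε·∑_{i∈S} a(i) and N(c,S) = c·T + ∑_{i∈S} a(i). Then there exist c ∈ {0,1} and S ⊆ Fin t with TP(c,S) ≥ σ·N(c,S) and TP(c,S) ≥ 2(σ+ε)T, if and only if there exists a subset S ⊆ Fin t with ∑_{i∈S} a(i) = T. -/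
/-- Correctness of the reduction from subset-sum to the 2D binned decision boundary
problem: with `TP(c,S) = c·2σT + 2ε·∑_{i∈S} a i` and `N(c,S) = c·T + ∑_{i∈S} a i`,
a feasible choice (precision `TP ≥ σ·N` and recall `TP ≥ 2(σ+ε)T`) exists iff the
subset-sum instance has a solution. -/
theorem subset_sum_reduction_correct
    (t : ℕ) (a : Fin t → ℕ) (T : ℕ) (hT : 1 ≤ T)
    (σ : ℝ) (hσ : 0 < σ) (hσ' : σ ≤ 1 / 2)
    (ε : ℝ) (hε : 0 < ε) (hε' : ε < σ / (2 * ((T : ℝ) + 1))) :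
    (∃ (c : Fin 2) (S : Finset (Fin t)),
        σ * ((c : ℝ) * T + ∑ i ∈ S, (a i : ℝ)) ≤
            (c : ℝ) * (2 * σ * T) + 2 * ε * ∑ i ∈ S, (a i : ℝ) ∧
          2 * (σ + ε) * T ≤ (c : ℝ) * (2 * σ * T) + 2 * ε * ∑ i ∈ S, (a i : ℝ)) ↔
      ∃ S : Finset (Fin t), ∑ i ∈ S, a i = T := by
  have hT1 : (1:ℝ) ≤ T := by exact_mod_cast hT
  have h2T : (0:ℝ) < 2 * ((T:ℝ)+1) := by positivity
  have hεσ : 2 * ε * ((T:ℝ)+1) < σ := by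
    have := mul_lt_mul_of_pos_right hε' h2T
    rw [div_mul_cancel₀ _ (ne_of_gt h2T)] at this
    nlinarith
  constructor
  · rintro ⟨c, S, h1, h2⟩
    refine ⟨S, ?_⟩
    have hcast : ∑ i ∈ S, (a i : ℝ) = ((∑ i ∈ S, a i : ℕ) : ℝ) := by push_cast; ring
    set A : ℕ := ∑ i ∈ S, a i with hA
    rw [hcast] at h1 h2
    have hAnn : (0:ℝ) ≤ (A:ℝ) := Nat.cast_nonneg A
    have h2e : 2 * ε < σ := by
      nlinarith [mul_nonneg hε.le (by linarith : (0:ℝ) ≤ T)]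
    fin_cases c
    · exfalso
      simp only [Fin.val_zero, Nat.cast_zero, zero_mul, zero_add] at h1 h2
      rcases Nat.eq_zero_or_pos A with h0 | h0
      · rw [h0] at h2
        simp at h2
        nlinarith [mul_pos (by linarith : (0:ℝ) < σ + ε) (by linarith : (0:ℝ) < T)]
      · have hA1 : (1:ℝ) ≤ A := by exact_mod_cast h0
        nlinarith [mul_pos (by linarith : (0:ℝ) < σ - 2*ε) (by linarith : (0:ℝ) < A)]
    · simp only [Fin.val_one, Nat.cast_one, one_mul] at h1 h2
      have hTA : (T:ℝ) ≤ A := by nlinarith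
      have hAT : (A:ℝ) ≤ T := by
        by_contra h
        push_neg at h
        have hA1 : (T:ℝ) + 1 ≤ A := by
          have : T < A := by exact_mod_cast h
          exact_mod_cast Nat.succ_le_of_lt this
        nlinarith [mul_le_mul_of_nonneg_left hA1 (by linarith : (0:ℝ) ≤ σ - 2*ε)]
      have : (A:ℝ) = T := le_antisymm hAT hTA
      exact_mod_cast this
  · rintro ⟨S, hS⟩
    refine ⟨1, S, ?_, ?_⟩ <;>
    · have hs : ∑ i ∈ S, (a i:ℝ) = (T:ℝ) := by
        rw [← hS]; push_cast; ring
      simp only [Fin.val_one, Nat.cast_one, one_mul, hs]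
      nlinarith
end
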